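/- arXiv:2510.18520 — 2 statements merged into one kernel-verified Lean document; each statement's English description precedes it below -/
import Mathlib

section
/- Let P > 0, N > 0 be reals, let α satisfy P/(P+N) < α < 1, and let κ satisfy P ≤ κ < P/α. Then the two-dimensional Lebesgue measure of the feasible region S(α,κ) equals (2·κ·P − α·κ² − P²)/(2·N·P). (In this case S(α,κ) is the quadrilateral with vertices (0,0), ((1−α)·κ/N, α·κ/P), ((κ−P)/N, 1), and (0,1).) -/
/-!
Because `α κ < P` and `(1 - α) κ < N`, the precision line `y = α N x / ((1 - α) P)` meets the
capacity line `P y + N x = κ` inside the unit square, at `x = (1 - α) κ / N`. So `S(α, κ)` is the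
region over `[0, (1 - α) κ / N]` between the precision line and `min 1 ((κ - N x) / P)`, whose
upper envelope switches from `1` to the capacity line at `x = (κ - P) / N ≥ 0`; integrating the
gap gives the area.
-/

open MeasureTheory Set

theorem volume_region_between_cc_eq_lintegral {α : Type*} [MeasurableSpace α] {μ : Measure α}
    {f g : α → ℝ} {s : Set α} (hf : Measurable f) (hg : Measurable g) (hs : MeasurableSet s) :
    μ.prod volume {p : α × ℝ | p.1 ∈ s ∧ p.2 ∈ Icc (f p.1) (g p.1)} =
      ∫⁻ x in s, ENNReal.ofReal (g x - f x) ∂μ := by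
  rw [Measure.prod_apply (measurableSet_region_between_cc hf hg hs), ← lintegral_indicator hs]
  congr 1 with x
  by_cases hx : x ∈ s
  · simp only [hx, indicator_of_mem, preimage_ofPred_eq, true_and]
    exact Real.volume_Icc
  · simp [hx]

theorem volume_region_between_cc_eq_integral {f g : ℝ → ℝ} {a b : ℝ} (hf : Continuous f)
    (hg : Continuous g) (hab : a ≤ b) (hfg : ∀ x ∈ Icc a b, f x ≤ g x) :
    volume {p : ℝ × ℝ | p.1 ∈ Icc a b ∧ p.2 ∈ Icc (f p.1) (g p.1)} =
      ENNReal.ofReal (∫ x in a..b, g x - f x) := by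
  rw [Measure.volume_eq_prod,
    volume_region_between_cc_eq_lintegral hf.measurable hg.measurable measurableSet_Icc,
    intervalIntegral.integral_of_le hab, ← integral_Icc_eq_integral_Ioc]
  refine (ofReal_integral_eq_lintegral_ofReal (hg.sub hf).integrableOn_Icc ?_).symm
  filter_upwards [ae_restrict_mem measurableSet_Icc] with x hx
  exact sub_nonneg.2 (hfg x hx)

theorem integral_min_one_sub_mul_div {P N κ b : ℝ} (hP : 0 < P) (hN : 0 < N) (hκ : P ≤ κ)
    (hb : κ - P ≤ N * b) :
    ∫ x in (0:ℝ)..b, min 1 ((κ - N * x) / P) =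
      (κ * b - N * b ^ 2 / 2) / P - (κ - P) ^ 2 / (2 * N * P) := by
  set x₁ := (κ - P) / N
  have hNx₁ : N * x₁ = κ - P := mul_div_cancel₀ _ hN.ne'
  have hx₁ : 0 ≤ x₁ := div_nonneg (by linarith) hN.le
  have hx₁b : x₁ ≤ b := (div_le_iff₀' hN).2 hb
  have hcont : Continuous fun x => min 1 ((κ - N * x) / P) := by fun_prop
  rw [← intervalIntegral.integral_add_adjacent_intervals (hcont.intervalIntegrable 0 x₁)
    (hcont.intervalIntegrable x₁ b)]
  have h_left : ∫ x in (0:ℝ)..x₁, min 1 ((κ - N * x) / P) = ∫ x in (0:ℝ)..x₁, (1:ℝ) := by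
    refine intervalIntegral.integral_congr fun x hx => min_eq_left ?_
    rw [uIcc_of_le hx₁] at hx
    rw [le_div_iff₀ hP]
    linarith [(le_div_iff₀' hN).1 hx.2]
  have h_right : ∫ x in x₁..b, min 1 ((κ - N * x) / P) = ∫ x in x₁..b, (κ - N * x) / P := by
    refine intervalIntegral.integral_congr fun x hx => min_eq_right ?_
    rw [uIcc_of_le hx₁b] at hx
    rw [div_le_one hP]
    linarith [(div_le_iff₀' hN).1 hx.1]
  rw [h_left, h_right, intervalIntegral.integral_div, intervalIntegral.integral_sub
    intervalIntegrable_const ((by fun_prop : Continuous fun x => N * x).intervalIntegrable _ _),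
    intervalIntegral.integral_const_mul, integral_id, intervalIntegral.integral_const,
    intervalIntegral.integral_const, smul_eq_mul, smul_eq_mul]
  field_simp
  linear_combination (P - κ + N * x₁) * hNx₁

def feasibleRegion (P N α κ : ℝ) : Set (ℝ × ℝ) :=
  {v | v.1 ∈ Icc 0 1 ∧ v.2 ∈ Icc 0 1 ∧ (1 - α) * P * v.2 ≥ α * N * v.1 ∧ P * v.2 + N * v.1 ≤ κ}

section

variable {P N α κ : ℝ}

theorem feasibleRegion_eq_region_between_cc (hP : 0 < P) (hN : 0 < N) (hα0 : 0 ≤ α)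
    (hα1 : α < 1) (hκN : (1 - α) * κ ≤ N) :
    feasibleRegion P N α κ = {p : ℝ × ℝ | p.1 ∈ Icc 0 ((1 - α) * κ / N) ∧
      p.2 ∈ Icc (α * N / ((1 - α) * P) * p.1) (min 1 ((κ - N * p.1) / P))} := by
  have hq : 0 < (1 - α) * P := mul_pos (by linarith) hP
  ext ⟨x, y⟩
  simp only [feasibleRegion, mem_ofPred_eq, mem_Icc, le_min_iff, ge_iff_le, div_mul_eq_mul_div,
    div_le_iff₀ hq, le_div_iff₀ hN, le_div_iff₀ hP]
  constructor
  · rintro ⟨⟨hx0, -⟩, ⟨-, hy1⟩, hprec, hcap⟩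
    refine ⟨⟨hx0, ?_⟩, by linarith, hy1, by linarith⟩
    nlinarith
  · rintro ⟨⟨hx0, hx⟩, hprec, hy1, hcap⟩
    refine ⟨⟨hx0, by nlinarith⟩, ⟨?_, hy1⟩, by linarith, by linarith⟩
    nlinarith [mul_nonneg (mul_nonneg hα0 hN.le) hx0]

theorem precision_bound_le_capacity_bound (hP : 0 < P) (hN : 0 < N) (hα0 : 0 ≤ α)
    (hα1 : α < 1) (hακ : α * κ ≤ P) :
    ∀ x ∈ Icc 0 ((1 - α) * κ / N), α * N / ((1 - α) * P) * x ≤ min 1 ((κ - N * x) / P) := by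
  have hq : 0 < (1 - α) * P := mul_pos (by linarith) hP
  rintro x ⟨hx0, hx⟩
  rw [le_div_iff₀ hN] at hx
  refine le_min ?_ ?_
  · rw [div_mul_eq_mul_div, div_le_iff₀ hq]
    nlinarith
  · rw [div_mul_eq_mul_div, div_le_div_iff₀ hq hP]
    nlinarith

end

/-- Area of the feasible region, case 2 (quadrilateral): P ≤ κ < P/α. -/
theorem area_feasible_region_case2
    (P N α κ : ℝ) (hP : 0 < P) (hN : 0 < N)
    (hαlo : P / (P + N) < α) (hα1 : α < 1) (hκlo : P ≤ κ) (hκhi : κ < P / α) :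
    volume {v : ℝ × ℝ | v.1 ∈ Set.Icc (0:ℝ) 1 ∧ v.2 ∈ Set.Icc (0:ℝ) 1 ∧
        (1 - α) * P * v.2 ≥ α * N * v.1 ∧ P * v.2 + N * v.1 ≤ κ} =
      ENNReal.ofReal ((2 * κ * P - α * κ ^ 2 - P ^ 2) / (2 * N * P)) := by
  have hα0 : 0 < α := (div_pos hP (by linarith)).trans hαlo
  have hακ : α * κ < P := by linarith [(lt_div_iff₀ hα0).1 hκhi]
  have hprev : P < α * (P + N) := (div_lt_iff₀ (by linarith)).1 hαlo
  have hκN : (1 - α) * κ < N := by nlinarith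
  have hx₂ : 0 ≤ (1 - α) * κ / N := div_nonneg (mul_nonneg (by linarith) (by linarith)) hN.le
  have h1α : 1 - α ≠ 0 := by linarith
  show volume (feasibleRegion P N α κ) = _
  rw [feasibleRegion_eq_region_between_cc hP hN hα0.le hα1 hκN.le,
    volume_region_between_cc_eq_integral (by fun_prop) (by fun_prop) hx₂
      (precision_bound_le_capacity_bound hP hN hα0.le hα1 hακ.le),
    intervalIntegral.integral_sub (Continuous.intervalIntegrable (by fun_prop) _ _)
      (Continuous.intervalIntegrable (by fun_prop) _ _),
    integral_min_one_sub_mul_div hP hN hκlo (by rw [mul_div_cancel₀ _ hN.ne']; linarith),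
    intervalIntegral.integral_const_mul, integral_id]
  congr 1
  field_simp
  ring
end

section
/- Let P > 0, N > 0, α ∈ (0,1), and t ∈ [0,1] be reals with t ≤ α·N/(α·N + (1−α)·P). Then for every point (x,y) with x ≥ 0 and (1−α)·P·y ≥ α·N·x, one has t·x + (1−t)·(1−y) ≤ 1 − t. That is, whenever t is at most α·N/(α·N + (1−α)·P), the never-alarm baseline (0,0), whose normalized cost is 1 − t, has the highest normalized cost among all points satisfying the minimum-precision constraint. -/
/-- If t ≤ αN/(αN + (1−α)P), the never-alarm baseline (0,0) has the highest
normalized cost among all points satisfying the minimum-precision constraint. -/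
theorem never_alarm_has_max_cost
    (P N α t : ℝ) (hP : 0 < P) (hN : 0 < N) (hα0 : 0 < α) (hα1 : α < 1)
    (ht0 : 0 ≤ t) (ht1 : t ≤ 1) (ht : t ≤ α * N / (α * N + (1 - α) * P)) :
    ∀ x y : ℝ, 0 ≤ x → (1 - α) * P * y ≥ α * N * x →
      t * x + (1 - t) * (1 - y) ≤ 1 - t := by
  intro x y hx hy
  have h2 : 0 < (1 - α) * P := by nlinarith
  have hD : 0 < α * N + (1 - α) * P := by nlinarith [mul_pos hα0 hN]
  have h1 : t * (α * N + (1 - α) * P) ≤ α * N := (le_div_iff₀ hD).mp ht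
  nlinarith [mul_le_mul_of_nonneg_right h1 hx, mul_nonneg ht0 hx]
end
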